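/- arXiv:math/0610921 — 2 statements merged into one kernel-verified Lean document; each statement's English description precedes it below -/
import Mathlib

section
/- Let A be a ring with 1/2, S ∈ A, and suppose v = z⁻¹·(((1+z)/2)² − ((1−z)/2)²·S) is a unit in A[z,z⁻¹]. Define R ∈ A as the coefficient of z⁰ in S·v⁻¹. Then R² = S and R commutes with S. -/
/-!
Writing `v = α z⁻¹ + β + α z` with `β² - 4α² = S`, the coefficients of `w = v⁻¹` satisfy
`α w (n - 1) + β w n + α w (n + 1) = δ n 0`. Away from `n = 0` this recurrence preserves the
quadratic form `α (w n ^ 2 + w (n + 1) ^ 2) + β w n w (n + 1)`, which vanishes for `|n|` large;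
so it vanishes at `n = 0` and `n = -1`, and together with the recurrence at `0` this forces
`S * w 0 ^ 2 = 1`, whence `(S * w 0) ^ 2 = S`.
Over a noncommutative ring, every coefficient of `w` commutes with everything commuting with `S`,
so the whole computation takes place in the bicommutant of `S`, a commutative subring.
-/

open LaurentPolynomial

section SymmetricRecurrence

open Filter

variable {K : Type*} [CommRing K] (α β : K) (x : ℤ → K)

def recurrenceInvariant (n : ℤ) : K := α * (x n ^ 2 + x (n + 1) ^ 2) + β * x n * x (n + 1)

lemma recurrenceInvariant_sub_one {n : ℤ} (h : α * x (n - 1) + β * x n + α * x (n + 1) = 0) :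
    recurrenceInvariant α β x (n - 1) = recurrenceInvariant α β x n := by
  unfold recurrenceInvariant
  rw [sub_add_cancel]
  linear_combination (x (n - 1) - x (n + 1)) * h

lemma eventually_recurrenceInvariant_eq_zero (x : ℤ →₀ K) :
    ∀ᶠ n in cofinite, recurrenceInvariant α β x n = 0 := by
  have hx : ∀ᶠ n in cofinite, x n = 0 := eventually_cofinite.2 x.hasFiniteSupport
  have hx' : ∀ᶠ n in cofinite, x (n + 1) = 0 :=
    (add_left_injective 1).tendsto_cofinite.eventually hx
  filter_upwards [hx, hx'] with n h h'
  simp [recurrenceInvariant, h, h']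

theorem sq_sub_four_mul_sq_mul_apply_zero_sq_eq_one (x : ℤ →₀ K)
    (hx : ∀ n, α * x (n - 1) + β * x n + α * x (n + 1) = if n = 0 then 1 else 0) :
    (β ^ 2 - 4 * α ^ 2) * x 0 ^ 2 = 1 := by
  set Q := recurrenceInvariant α β x
  have hstep : ∀ n ≠ 0, Q (n - 1) = Q n := fun n hn =>
    recurrenceInvariant_sub_one α β x (by simpa [hn] using hx n)
  have hQ : ∀ᶠ n in cofinite, Q n = 0 := eventually_recurrenceInvariant_eq_zero α β x
  rw [Int.cofinite_eq, eventually_sup] at hQ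
  have hQ0 : Q 0 = 0 := by
    obtain ⟨N, hN, hN0⟩ := (hQ.2.and (eventually_ge_atTop 0)).exists
    induction N, hN0 using Int.leInduction with
    | base => exact hN
    | succ n hn ih => exact ih (by rwa [← hstep (n + 1) (by omega), add_sub_cancel_right] at hN)
  have hQ1 : Q (-1) = 0 := by
    obtain ⟨N, hN, hN0⟩ := (hQ.1.and (eventually_le_atBot (-1))).exists
    induction N, hN0 using Int.leInductionDown with
    | base => exact hN
    | pred n hn ih => exact ih (by rwa [hstep n (by omega)] at hN)
  simp only [Q, recurrenceInvariant] at hQ0 hQ1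
  have h0 := hx 0
  norm_num at hQ0 hQ1 h0
  have hsymm : x 1 = x (-1) := by
    linear_combination hQ0 - hQ1 - (x 1 - x (-1)) * h0
  rw [hsymm] at hQ0 h0
  linear_combination (-4 * α) * hQ0 + (2 * α * x (-1) + β * x 0 + 1) * h0

end SymmetricRecurrence

instance Subring.centralizerCentralizerSingletonCommRing {A : Type*} [Ring A] (a : A) :
    CommRing (Subring.centralizer (Set.centralizer {a})) :=
  { (Subring.centralizer (Set.centralizer {a})).toRing with
    mul_comm := fun x y => Subtype.ext <|
      Set.centralizer_centralizer_comm_of_comm (by simp) _ x.2 _ y.2 }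

namespace LaurentPolynomial

section Semiring

variable {A B : Type*} [Semiring A] [Semiring B]

lemma coeff_C_mul (a : A) (f : A[T;T⁻¹]) (n : ℤ) : (C a * f).coeff n = a * f.coeff n :=
  AddMonoidAlgebra.coeff_single_zero_mul f a n

lemma coeff_mul_C (a : A) (f : A[T;T⁻¹]) (n : ℤ) : (f * C a).coeff n = f.coeff n * a :=
  AddMonoidAlgebra.coeff_mul_single_zero f a n

lemma coeff_C_mul_T_mul (a : A) (m : ℤ) (f : A[T;T⁻¹]) (n : ℤ) :
    (C a * T m * f).coeff n = a * f.coeff (n - m) := by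
  rw [← single_eq_C_mul_T, AddMonoidAlgebra.coeff_single_mul_apply, neg_add_eq_sub]

lemma coeff_one (n : ℤ) : (1 : A[T;T⁻¹]).coeff n = if n = 0 then 1 else 0 := by
  rw [AddMonoidAlgebra.one_def, AddMonoidAlgebra.coeff_single, Finsupp.single_apply]
  simp only [eq_comm]

lemma commute_coeff_of_commute_C {c : A} {f : A[T;T⁻¹]} (h : Commute (C c) f) (n : ℤ) :
    Commute c (f.coeff n) := by
  have := congrArg (fun p => p.coeff n) h.eq
  simp only [coeff_C_mul, coeff_mul_C] at this
  exact this

lemma mapRingHom_C (f : A →+* B) (a : A) : AddMonoidAlgebra.mapRingHom ℤ f (C a) = C (f a) :=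
  AddMonoidAlgebra.mapRingHom_single f 0 a

lemma mapRingHom_T (f : A →+* B) (n : ℤ) : AddMonoidAlgebra.mapRingHom ℤ f (T n) = T n := by
  rw [T, AddMonoidAlgebra.mapRingHom_single, map_one]
  rfl

end Semiring

variable {A B : Type*} [Ring A] [Ring B]

noncomputable def sqrtKernel (h S : A) : A[T;T⁻¹] :=
  T (-1) * ((C h * (1 + T 1)) ^ 2 - (C h * (1 - T 1)) ^ 2 * C S)

lemma mapRingHom_sqrtKernel (f : A →+* B) (h S : A) :
    AddMonoidAlgebra.mapRingHom ℤ f (sqrtKernel h S) = sqrtKernel (f h) (f S) := by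
  simp only [sqrtKernel, map_mul, map_sub, map_pow, map_add, map_one, mapRingHom_C, mapRingHom_T]

lemma commute_C_sqrtKernel {c h S : A} (hh : Commute c h) (hS : Commute c S) :
    Commute (C c) (sqrtKernel h S) := by
  have hT (n : ℤ) : Commute (C c) (T n) := (commute_T n _).symm
  have hh' := hh.map C
  exact (hT _).mul_right <|
    ((hh'.mul_right ((Commute.one_right _).add_right (hT 1))).pow_right 2).sub_right <|
      ((hh'.mul_right ((Commute.one_right _).sub_right (hT 1))).pow_right 2).mul_right (hS.map C)

lemma sqrtKernel_eq {K : Type*} [CommRing K] (h S : K) :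
    sqrtKernel h S = C (h ^ 2 * (1 - S)) * T (-1) + C (2 * h ^ 2 * (1 + S)) +
      C (h ^ 2 * (1 - S)) * T 1 := by
  have hT : (T (-1) * T 1 : K[T;T⁻¹]) = 1 := by rw [← T_add]; rfl
  simp only [sqrtKernel, map_mul, map_sub, map_add, map_pow, map_one, map_ofNat]
  linear_combination C h ^ 2 * (2 + T 1 + 2 * C S - T 1 * C S) * hT

theorem mul_coeff_zero_sq_eq_one {K : Type*} [CommRing K] {h S : K} (h2 : 2 * h = 1)
    {w : K[T;T⁻¹]} (hw : sqrtKernel h S * w = 1) : S * w.coeff 0 ^ 2 = 1 := by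
  have hrec (n : ℤ) : h ^ 2 * (1 - S) * w.coeff (n - 1) + 2 * h ^ 2 * (1 + S) * w.coeff n +
      h ^ 2 * (1 - S) * w.coeff (n + 1) = if n = 0 then 1 else 0 := by
    have := congrArg (fun p => p.coeff n) hw
    simp only [sqrtKernel_eq, add_mul, AddMonoidAlgebra.coeff_add, Finsupp.add_apply,
      coeff_C_mul_T_mul, coeff_C_mul, coeff_one, sub_neg_eq_add] at this
    linear_combination this
  have := sq_sub_four_mul_sq_mul_apply_zero_sq_eq_one _ _ w.coeff hrec
  -- here `β ^ 2 - 4 * α ^ 2 = (2 * h) ^ 4 * S`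
  linear_combination this - S * w.coeff 0 ^ 2 * (2 * h + 1) * (4 * h ^ 2 + 1) * h2

theorem coeff_inv_mem_centralizer_centralizer {h S : A} (hh : h ∈ Set.center A)
    (u : A[T;T⁻¹]ˣ) (hu : (u : A[T;T⁻¹]) = sqrtKernel h S) (n : ℤ) :
    (↑u⁻¹ : A[T;T⁻¹]).coeff n ∈ (Set.centralizer {S}).centralizer := by
  intro c hc
  have hcS : Commute c S := (Set.mem_centralizer_iff.1 hc S rfl).symm
  have hcu : Commute (C c) u :=
    hu ▸ commute_C_sqrtKernel ((Set.mem_center_iff.1 hh).comm c).symm hcS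
  exact (commute_coeff_of_commute_C hcu.units_inv_right n).eq

theorem mul_coeff_zero_inv_sq_eq_one {h S : A} (hh : h ∈ Set.center A) (h2 : 2 * h = 1)
    (u : A[T;T⁻¹]ˣ) (hu : (u : A[T;T⁻¹]) = sqrtKernel h S) :
    S * (↑u⁻¹ : A[T;T⁻¹]).coeff 0 ^ 2 = 1 := by
  let K := Subring.centralizer (Set.centralizer {S})
  let hK : K := ⟨h, Subring.center_le_centralizer _ hh⟩
  let SK : K := ⟨S, Set.subset_centralizer_centralizer rfl⟩
  obtain ⟨w, hw⟩ : (↑u⁻¹ : A[T;T⁻¹]) ∈ Set.range (AddMonoidAlgebra.mapRingHom ℤ K.subtype) := by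
    rw [AddMonoidAlgebra.coe_mapRingHom, AddMonoidAlgebra.range_map]
    exact fun n => ⟨⟨_, coeff_inv_mem_centralizer_centralizer hh u hu n⟩, rfl⟩
  have hmul : sqrtKernel hK SK * w = 1 := by
    apply AddMonoidAlgebra.map_injective (K.subtype : K →+ A) Subtype.val_injective
    rw [← AddMonoidAlgebra.coe_mapRingHom, map_mul, map_one, mapRingHom_sqrtKernel, hw]
    exact hu ▸ u.mul_inv
  have h2K : 2 * hK = 1 := Subtype.ext <| by push_cast; exact h2
  have hw0 : ((w.coeff 0 : K) : A) = (↑u⁻¹ : A[T;T⁻¹]).coeff 0 := by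
    rw [← hw, AddMonoidAlgebra.coeff_mapRingHom]; rfl
  simpa [hw0] using congrArg Subtype.val (mul_coeff_zero_sq_eq_one h2K hmul)

end LaurentPolynomial

theorem stmt_8 (A : Type*) [Ring A] [Invertible (2 : A)] (S : A)
    (hv : IsUnit (T (-1) *
      ((C (⅟2 : A) * (1 + T 1)) ^ 2 - (C (⅟2 : A) * (1 - T 1)) ^ 2 * C S)))
    (R : A)
    (hR : R = (((C S * ((hv.unit⁻¹ : (LaurentPolynomial A)ˣ) : LaurentPolynomial A) :
      LaurentPolynomial A).coeff : ℤ →₀ A) 0)) :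
    R ^ 2 = S ∧ Commute R S := by
  set w : A[T;T⁻¹] := ↑hv.unit⁻¹
  have hhalf : (⅟2 : A) ∈ Set.center A := Set.invOf_mem_center (Set.ofNat_mem_center A 2)
  have hSw : Commute S (w.coeff 0) :=
    coeff_inv_mem_centralizer_centralizer hhalf hv.unit hv.unit_spec 0 S fun _ hm => by
      rw [Set.mem_singleton_iff.1 hm]
  have hsq : S * w.coeff 0 ^ 2 = 1 :=
    mul_coeff_zero_inv_sq_eq_one hhalf (mul_invOf_self 2) hv.unit hv.unit_spec
  obtain rfl : R = S * w.coeff 0 := hR.trans (coeff_C_mul S w 0)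
  refine ⟨?_, (Commute.refl S).mul_left hSw.symm⟩
  rw [sq, mul_assoc, ← mul_assoc (w.coeff 0), ← hSw.eq, mul_assoc, ← sq, hsq, mul_one]
end

section
/- Let A be any ring, P ∈ A, and suppose u = (1−P)+Pz is a unit in A[z,z⁻¹]. Then u' = P + (1−P)z is also a unit, and if E is the z⁰-coefficient of Pz·u⁻¹ and E' is the z⁰-coefficient of (1−P)z·u'⁻¹, then E' = 1 − E. -/
/-!
Let `σ : f(z) ↦ f(z⁻¹)`. Since `z` is central and `σ` fixes constants,
`u' = P + (1 - P) z = z · σ(u)`, so `u'` is a unit with `u'⁻¹ = σ(u⁻¹) z⁻¹`, and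
`(1 - P) z · u'⁻¹ = σ((1 - P) u⁻¹)`. As `σ` preserves `z⁰`-coefficients,
`E' = [z⁰] ((1 - P) u⁻¹) = [z⁰] (u u⁻¹) - [z⁰] (P z u⁻¹) = 1 - E`.
-/

open LaurentPolynomial

namespace LaurentPolynomial

variable {R : Type*} [Semiring R]

/-- `f(T) ↦ f(T⁻¹)` over a possibly noncommutative semiring, unlike `LaurentPolynomial.invert`. -/
noncomputable def invertRingEquiv : R[T;T⁻¹] ≃+* R[T;T⁻¹] :=
  AddMonoidAlgebra.mapDomainRingEquiv R (AddEquiv.neg ℤ)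

@[simp]
lemma invertRingEquiv_T (n : ℤ) : invertRingEquiv (T n : R[T;T⁻¹]) = T (-n) :=
  AddMonoidAlgebra.mapDomainRingEquiv_single ..

@[simp]
lemma invertRingEquiv_C (a : R) : invertRingEquiv (C a) = C a := by
  rw [← single_eq_C, invertRingEquiv, AddMonoidAlgebra.mapDomainRingEquiv_single,
    AddEquiv.neg_apply, neg_zero]

@[simp]
lemma coeff_invertRingEquiv (f : R[T;T⁻¹]) (n : ℤ) :
    (invertRingEquiv f).coeff n = f.coeff (-n) := by
  simp [invertRingEquiv]

lemma T_one_mul_invertRingEquiv_add_mul_T_one (f g : R[T;T⁻¹]) :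
    T 1 * invertRingEquiv (f + g * T 1) = invertRingEquiv g + invertRingEquiv f * T 1 := by
  rw [map_add, map_mul, invertRingEquiv_T, mul_add, ← mul_assoc, T_mul 1 (invertRingEquiv g),
    mul_T_assoc,
    add_neg_cancel, T_zero, mul_one, T_mul, add_comm]

lemma coeff_zero_invertRingEquiv_mul_T_one_mul_inv {u u' : R[T;T⁻¹]ˣ}
    (hu' : (u' : R[T;T⁻¹]) = T 1 * invertRingEquiv u) (f : R[T;T⁻¹]) :
    (invertRingEquiv f * T 1 * (↑u'⁻¹ : R[T;T⁻¹])).coeff 0 = (f * ↑u⁻¹).coeff 0 := by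
  have hinv : (↑u'⁻¹ : R[T;T⁻¹]) = invertRingEquiv ↑u⁻¹ * T (-1) := by
    refine Units.inv_eq_of_mul_eq_one_right ?_
    rw [hu', mul_assoc, ← mul_assoc (invertRingEquiv _), ← map_mul, Units.mul_inv, map_one,
      one_mul, ← T_add, add_neg_cancel, T_zero]
  rw [hinv, mul_assoc, T_mul, mul_T_assoc, neg_add_cancel, T_zero, mul_one, ← map_mul,
    coeff_invertRingEquiv, neg_zero]

lemma coeff_zero_mul_inv_add_coeff_zero_mul_inv {u : R[T;T⁻¹]ˣ} {f g : R[T;T⁻¹]}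
    (hu : (u : R[T;T⁻¹]) = f + g) : (f * ↑u⁻¹).coeff 0 + (g * ↑u⁻¹).coeff 0 = 1 := by
  rw [← Finsupp.add_apply, ← AddMonoidAlgebra.coeff_add, ← add_mul,
    ← hu, Units.mul_inv, AddMonoidAlgebra.coeff_one_zero]

end LaurentPolynomial

theorem stmt_16 (A : Type*) [Ring A] (P : A)
    (hu : IsUnit ((1 - C P) + C P * T 1))
    (E : A)
    (hE : E = ((AddMonoidAlgebra.coeff (C P * T 1 * ((hu.unit⁻¹ : (LaurentPolynomial A)ˣ) : LaurentPolynomial A) :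
      LaurentPolynomial A) : ℤ →₀ A) 0)) :
    ∃ hu' : IsUnit (C P + (1 - C P) * T 1),
      ((AddMonoidAlgebra.coeff ((1 - C P) * T 1 *
        ((hu'.unit⁻¹ : (LaurentPolynomial A)ˣ) : LaurentPolynomial A) :
        LaurentPolynomial A) : ℤ →₀ A) 0) = 1 - E := by
  have hσ : C P + (1 - C P) * T 1 = T 1 * invertRingEquiv ((1 - C P) + C P * T 1) := by
    rw [T_one_mul_invertRingEquiv_add_mul_T_one]
    simp
  have hu' : IsUnit (C P + (1 - C P) * T 1) := hσ ▸ (isUnit_T 1).mul (hu.map _)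
  refine ⟨hu', ?_⟩
  have hE' := coeff_zero_invertRingEquiv_mul_T_one_mul_inv
    (u := hu.unit) (u' := hu'.unit) (by rw [hu'.unit_spec, hu.unit_spec, hσ]) (1 - C P)
  rw [map_sub, map_one, invertRingEquiv_C] at hE'
  rw [hE', hE, ← coeff_zero_mul_inv_add_coeff_zero_mul_inv hu.unit_spec, add_sub_cancel_right]
end
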